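/- For the metric of Lemma 3.1 built from an algebraic curvature tensor R², the curvature components with exactly one index in a t-direction satisfy R(∂u_a, ∂u_b, ∂u_c, ∂t_i) = ½(ψ̃_{acbi} − ψ̃_{bcai}) = R²_{abci}, where ψ_{abcd} = −(2/3)(R²_{acdb} + R²_{adcb}). -/

import Mathlib

open scoped BigOperators

/-- Coordinate indices on `ℝ^{3s}`: `(0, a) = u_a`, `(1, a) = v_a`, `(2, a) = t_a`. -/
abbrev CIdx (s : ℕ) := Fin 3 × Fin s

/-- A (component-level) algebraic curvature tensor. -/
def IsACT {ι : Type*} (F : ι → ι → ι → ι → ℝ) : Prop :=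
  (∀ x y z w, F x y z w = - F y x z w) ∧
  (∀ x y z w, F x y z w = F z w x y) ∧
  (∀ x y z w, F x y z w + F y z x w + F z x y w = 0)

/-- `ψ_{abcd} := -(2/3)(R²_{acdb} + R²_{adcb})`. -/
noncomputable def psi {s : ℕ} (R2 : Fin s → Fin s → Fin s → Fin s → ℝ) (a b c d : Fin s) : ℝ :=
  -(2 / 3) * (R2 a c d b + R2 a d c b)

/-- The metric of Lemma 3.1 at the point `p`:
`g(∂u_a, ∂u_b) = Σ_{c,d} ψ_{abcd} u_c t_d`, `g(∂u_a, ∂v_b) = δ_{ab}`,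
`g(∂t_a, ∂t_b) = -δ_{ab}`, all other components zero. -/
noncomputable def gMet {s : ℕ} (R2 : Fin s → Fin s → Fin s → Fin s → ℝ) (p : CIdx s → ℝ) :
    CIdx s → CIdx s → ℝ :=
  fun x y =>
    if x.1 = 0 ∧ y.1 = 0 then
      ∑ c, ∑ d, psi R2 x.2 y.2 c d * p ((0 : Fin 3), c) * p ((2 : Fin 3), d)
    else if (x.1 = 0 ∧ y.1 = 1) ∨ (x.1 = 1 ∧ y.1 = 0) then (if x.2 = y.2 then 1 else 0)
    else if x.1 = 2 ∧ y.1 = 2 then (if x.2 = y.2 then (-1 : ℝ) else 0)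
    else 0

/-- Christoffel symbols of the first kind
`Γ_{xyz} = ½(∂_x g_{yz} + ∂_y g_{xz} - ∂_z g_{xy})`. -/
noncomputable def Gamma1 {s : ℕ} (R2 : Fin s → Fin s → Fin s → Fin s → ℝ) (p : CIdx s → ℝ)
    (x y z : CIdx s) : ℝ :=
  (fderiv ℝ (fun q => gMet R2 q y z) p (Pi.single x 1)
    + fderiv ℝ (fun q => gMet R2 q x z) p (Pi.single y 1)
    - fderiv ℝ (fun q => gMet R2 q x y) p (Pi.single z 1)) / 2

/-- Christoffel symbols with raised third index:
`Γ_{xy}{}^z = Σ_w g^{zw} Γ_{xyw}`, `g^{..}` the inverse metric. -/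
noncomputable def Gamma2 {s : ℕ} (R2 : Fin s → Fin s → Fin s → Fin s → ℝ) (p : CIdx s → ℝ)
    (x y z : CIdx s) : ℝ :=
  ∑ w, (Matrix.of (gMet R2 p))⁻¹ z w * Gamma1 R2 p x y w

/-- The Riemann curvature tensor
`R_{r₁r₂r₃r₄} = ∂_{r₁}Γ_{r₂r₃r₄} - ∂_{r₂}Γ_{r₁r₃r₄}
  + Σ_{r₅} Γ_{r₁r₅r₄} Γ_{r₂r₃}{}^{r₅} - Σ_{r₅} Γ_{r₂r₅r₄} Γ_{r₁r₃}{}^{r₅}`. -/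
noncomputable def Riem {s : ℕ} (R2 : Fin s → Fin s → Fin s → Fin s → ℝ)
    (p : CIdx s → ℝ) (r1 r2 r3 r4 : CIdx s) : ℝ :=
  fderiv ℝ (fun q => Gamma1 R2 q r2 r3 r4) p (Pi.single r1 1)
    - fderiv ℝ (fun q => Gamma1 R2 q r1 r3 r4) p (Pi.single r2 1)
    + ∑ r5, Gamma1 R2 p r1 r5 r4 * Gamma2 R2 p r2 r3 r5
    - ∑ r5, Gamma1 R2 p r2 r5 r4 * Gamma2 R2 p r1 r3 r5

/-!
Only the `uu`-block of the metric depends on the point, and it is linear in `u` and in `t`.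
Hence `Γ_{u_b u_c t_i} = -½ ∂_{t_i} g_{u_b u_c} = -½ Σ_e ψ_{bcei} u_e`, whose `u_a`-derivative is
`-½ ψ_{bcai}`. The quadratic terms of `R_{u_a u_b u_c t_i}` vanish: `Γ_{u_a r t_i} = 0` unless `r` is
a `u`-direction, while `Γ_{u_b u_c}{}^{u_e} = Γ_{u_b u_c v_e} = 0` because the inverse metric pairs
`u_e` only with `v_e`. What is left, `½(ψ_{acbi} - ψ_{bcai})`, equals `R²_{abci}` by the first
Bianchi identity.
-/

namespace IsACT

variable {ι : Type*} {F : ι → ι → ι → ι → ℝ}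

lemma antisymm_right (h : IsACT F) (x y z w : ι) : F x y z w = -F x y w z := by
  rw [h.2.1, h.1, h.2.1 w]

lemma half_psi_sub_psi {s : ℕ} {R : Fin s → Fin s → Fin s → Fin s → ℝ} (h : IsACT R)
    (a b c i : Fin s) : (psi R a c b i - psi R b c a i) / 2 = R a b c i := by
  simp only [psi]
  linarith [h.2.2 a i b c, h.1 i b a c, h.1 b a i c, h.antisymm_right a b i c]

end IsACT

section

variable {s : ℕ} (R2 : Fin s → Fin s → Fin s → Fin s → ℝ)

lemma fderiv_gMet_eq_zero {y z : CIdx s} (h : ¬(y.1 = 0 ∧ z.1 = 0)) (p : CIdx s → ℝ) :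
    fderiv ℝ (fun q => gMet R2 q y z) p = 0 := by
  simp only [gMet, if_neg h, fderiv_fun_const]
  rfl

lemma fderiv_gMet_uu_apply (b c : Fin s) (p v : CIdx s → ℝ) :
    fderiv ℝ (fun q => gMet R2 q (0, b) (0, c)) p v =
      ∑ e, ∑ d, psi R2 b c e d * (p (0, e) * v (2, d) + p (2, d) * v (0, e)) := by
  have hasDeriv : HasFDerivAt (fun q => gMet R2 q (0, b) (0, c))
      (∑ e, ∑ d, psi R2 b c e d •
        (p (0, e) • ContinuousLinearMap.proj (R := ℝ) (φ := fun _ : CIdx s => ℝ) (2, d)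
          + p (2, d) • ContinuousLinearMap.proj (0, e))) p := by
    simp only [gMet, and_self, if_true]
    refine HasFDerivAt.fun_sum fun e _ => HasFDerivAt.fun_sum fun d _ => ?_
    simpa only [mul_assoc, ← smul_add] using
      ((hasFDerivAt_apply (𝕜 := ℝ) ((0 : Fin 3), e) p).fun_mul
        (hasFDerivAt_apply ((2 : Fin 3), d) p)).const_mul (psi R2 b c e d)
  simp [hasDeriv.fderiv, mul_add]

lemma Gamma1_uut (b c i : Fin s) (q : CIdx s → ℝ) :
    Gamma1 R2 q (0, b) (0, c) (2, i) = -(∑ e, psi R2 b c e i * q (0, e)) / 2 := by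
  rw [Gamma1, fderiv_gMet_eq_zero R2 (by simp), fderiv_gMet_eq_zero R2 (by simp),
    fderiv_gMet_uu_apply]
  simp [Pi.single_apply]

lemma Gamma1_uuv (b c f : Fin s) (q : CIdx s → ℝ) : Gamma1 R2 q (0, b) (0, c) (1, f) = 0 := by
  rw [Gamma1, fderiv_gMet_eq_zero R2 (by simp), fderiv_gMet_eq_zero R2 (by simp),
    fderiv_gMet_uu_apply]
  simp

lemma Gamma1_u_t_eq_zero {y : CIdx s} (hy : y.1 ≠ 0) (a i : Fin s) (q : CIdx s → ℝ) :
    Gamma1 R2 q (0, a) y (2, i) = 0 := by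
  rw [Gamma1, fderiv_gMet_eq_zero R2 (by simp), fderiv_gMet_eq_zero R2 (by simp),
    fderiv_gMet_eq_zero R2 (by simp [hy])]
  simp

/-- In `(u, v, t)`-blocks, `g = [[G, I, 0], [I, 0, 0], [0, 0, -I]]` has inverse
`[[0, I, 0], [I, -G, 0], [0, 0, -I]]`. -/
noncomputable def gMetInv (p : CIdx s → ℝ) : Matrix (CIdx s) (CIdx s) ℝ :=
  Matrix.of fun x y =>
    if (x.1 = 0 ∧ y.1 = 1) ∨ (x.1 = 1 ∧ y.1 = 0) then (if x.2 = y.2 then 1 else 0)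
    else if x.1 = 1 ∧ y.1 = 1 then -(∑ c, ∑ d, psi R2 x.2 y.2 c d * p (0, c) * p (2, d))
    else if x.1 = 2 ∧ y.1 = 2 then (if x.2 = y.2 then -1 else 0)
    else 0

lemma inv_gMet (p : CIdx s → ℝ) : (Matrix.of (gMet R2 p))⁻¹ = gMetInv R2 p := by
  refine Matrix.inv_eq_right_inv ?_
  ext ⟨x1, x2⟩ ⟨y1, y2⟩
  rw [Matrix.mul_apply, Fintype.sum_prod_type, Fin.sum_univ_three]
  fin_cases x1 <;> fin_cases y1 <;>
    simp [gMet, gMetInv, Matrix.one_apply, Finset.mul_sum, mul_comm]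

lemma Gamma2_uuu (b c e : Fin s) (p : CIdx s → ℝ) : Gamma2 R2 p (0, b) (0, c) (0, e) = 0 := by
  rw [Gamma2, inv_gMet, Fintype.sum_prod_type, Fin.sum_univ_three]
  simp [gMetInv, Gamma1_uuv]

lemma sum_Gamma1_u_t_mul_Gamma2_uu (a b c i : Fin s) (p : CIdx s → ℝ) :
    ∑ r, Gamma1 R2 p (0, a) r (2, i) * Gamma2 R2 p (0, b) (0, c) r = 0 := by
  refine Finset.sum_eq_zero fun ⟨k, e⟩ _ => ?_
  by_cases hk : k = 0
  · rw [hk, Gamma2_uuu, mul_zero]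
  · rw [Gamma1_u_t_eq_zero R2 hk, zero_mul]

lemma fderiv_Gamma1_uut_apply_u (a b c i : Fin s) (p : CIdx s → ℝ) :
    fderiv ℝ (fun q => Gamma1 R2 q (0, b) (0, c) (2, i)) p (Pi.single (0, a) 1) =
      -psi R2 b c a i / 2 := by
  have linear : (fun q => Gamma1 R2 q (0, b) (0, c) (2, i)) =
      ⇑((-1 / 2 : ℝ) • ∑ e, psi R2 b c e i •
        ContinuousLinearMap.proj (R := ℝ) (φ := fun _ : CIdx s => ℝ) (0, e)) := by
    funext q
    simp [Gamma1_uut, div_eq_inv_mul]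
  rw [linear, ContinuousLinearMap.fderiv]
  simp [Pi.single_apply, div_eq_inv_mul]

lemma Riem_uuut (a b c i : Fin s) (p : CIdx s → ℝ) :
    Riem R2 p (0, a) (0, b) (0, c) (2, i) = (psi R2 a c b i - psi R2 b c a i) / 2 := by
  rw [Riem, sum_Gamma1_u_t_mul_Gamma2_uu, sum_Gamma1_u_t_mul_Gamma2_uu,
    fderiv_Gamma1_uut_apply_u, fderiv_Gamma1_uut_apply_u]
  ring

end

theorem stmt12_general (s : ℕ)
    (R2 : Fin s → Fin s → Fin s → Fin s → ℝ) (h2 : IsACT R2)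
    (p : CIdx s → ℝ) (a b c i : Fin s) :
    Riem R2 p ((0 : Fin 3), a) ((0 : Fin 3), b) ((0 : Fin 3), c) ((2 : Fin 3), i) =
      (psi R2 a c b i - psi R2 b c a i) / 2 ∧
    Riem R2 p ((0 : Fin 3), a) ((0 : Fin 3), b) ((0 : Fin 3), c) ((2 : Fin 3), i) =
      R2 a b c i :=
  ⟨Riem_uuut R2 a b c i p, (Riem_uuut R2 a b c i p).trans (h2.half_psi_sub_psi a b c i)⟩

/-- for the metric of Lemma 3.1 built from an algebraic
curvature tensor `R²`, the curvature components with exactly one `t`-index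
satisfy `R(∂u_a, ∂u_b, ∂u_c, ∂t_i) = ½(ψ_{acbi} - ψ_{bcai}) = R²_{abci}`. -/
theorem stmt12 (s : ℕ) (hs : 2 ≤ s)
    (R2 : Fin s → Fin s → Fin s → Fin s → ℝ) (h2 : IsACT R2)
    (p : CIdx s → ℝ) (a b c i : Fin s) :
    Riem R2 p ((0 : Fin 3), a) ((0 : Fin 3), b) ((0 : Fin 3), c) ((2 : Fin 3), i) =
      (psi R2 a c b i - psi R2 b c a i) / 2 ∧
    Riem R2 p ((0 : Fin 3), a) ((0 : Fin 3), b) ((0 : Fin 3), c) ((2 : Fin 3), i) =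
      R2 a b c i :=
  stmt12_general s R2 h2 p a b c i
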